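/- Let R be a finite commutative local ring with maximal ideal J and residue field R/J of prime order p. If J is principal (equivalently dim_{F_p} J/J² ≤ 1), then R is generated as a ring by a single element and hence is not a union of proper subrings. -/

import Mathlib

/-- `R` is the union of finitely many proper subrings (subrings need not contain 1). -/
def Coverable (R : Type*) [NonUnitalRing R] : Prop :=
  ∃ (n : ℕ) (c : Fin n → NonUnitalSubring R), (∀ i, c i ≠ ⊤) ∧ ∀ x : R, ∃ i, x ∈ c i

/-!
Write the maximal ideal as `(π)`. Since the residue field is `𝔽_p`, every element of `R` is an
integer modulo `π`; iterating, `R = ℤ[π] + π ^ k R` for every `k`, and `π` is nilpotent, so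
`R = ℤ[π]`. As `π` is nilpotent, `1 + π` is a unit of the finite ring `R`, so some power of it
is `1`; hence the non-unital subring it generates is the subring `ℤ[1 + π] = ℤ[π] = R`.
-/

theorem intCast_surjective_of_natCard_eq_prime {K : Type*} [Ring K] {p : ℕ} (hp : p.Prime)
    (hK : Nat.card K = p) : Function.Surjective (Int.cast : ℤ → K) := by
  have : Finite K := Nat.finite_of_card_ne_zero (hK ▸ hp.ne_zero)
  have : Nontrivial K := Finite.one_lt_card_iff_nontrivial.mp (hK ▸ hp.one_lt)
  have hord : addOrderOf (1 : K) = p :=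
    (hp.eq_one_or_self_of_dvd _ (hK ▸ addOrderOf_dvd_natCard 1)).resolve_left
      (fun h ↦ one_ne_zero (AddMonoid.addOrderOf_eq_one_iff.mp h))
  have htop : AddSubgroup.zmultiples (1 : K) = ⊤ :=
    AddSubgroup.eq_top_of_card_eq _ (by rw [Nat.card_zmultiples, hord, hK])
  intro x
  obtain ⟨n, hn⟩ := AddSubgroup.mem_zmultiples_iff.mp (htop ▸ AddSubgroup.mem_top x)
  exact ⟨n, by rw [← hn, zsmul_one]⟩

theorem Subring.closure_singleton_eq_top_of_isNilpotent {R : Type*} [CommRing R] {π : R}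
    (hπ : IsNilpotent π) (hmod : ∀ r : R, ∃ n : ℤ, r - n ∈ Ideal.span {π}) :
    Subring.closure {π} = ⊤ := by
  set T := Subring.closure {π}
  have hπT : π ∈ T := Subring.subset_closure rfl
  have hdigits : ∀ (k : ℕ) (r : R), ∃ t ∈ T, ∃ s, r = t + π ^ k * s := by
    intro k
    induction k with
    | zero => exact fun r ↦ ⟨0, T.zero_mem, r, by simp⟩
    | succ k ih =>
      intro r
      obtain ⟨t, ht, s, rfl⟩ := ih r
      obtain ⟨n, hn⟩ := hmod s
      obtain ⟨s', hs'⟩ := Ideal.mem_span_singleton'.mp hn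
      refine ⟨t + n * π ^ k, T.add_mem ht (T.mul_mem (intCast_mem T n) (T.pow_mem hπT k)), s', ?_⟩
      rw [show s = n + s' * π by rw [hs']; ring]
      ring
  obtain ⟨N, hN⟩ := hπ
  refine eq_top_iff.mpr fun r _ ↦ ?_
  obtain ⟨t, ht, s, rfl⟩ := hdigits N r
  simpa [hN] using ht

theorem Subring.closure_singleton_one_add {R : Type*} [Ring R] (x : R) :
    Subring.closure {1 + x} = Subring.closure {x} := by
  apply le_antisymm <;> rw [Subring.closure_le, Set.singleton_subset_iff]
  · exact add_mem (one_mem _) (Subring.subset_closure rfl)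
  · simpa using sub_mem (Subring.subset_closure rfl : 1 + x ∈ Subring.closure {1 + x}) (one_mem _)

theorem NonUnitalSubring.one_mem_closure_singleton_of_isUnit {R : Type*} [Ring R] [Finite R]
    {u : R} (hu : IsUnit u) : (1 : R) ∈ NonUnitalSubring.closure {u} := by
  obtain ⟨n, hn, hun⟩ := isOfFinOrder_iff_pow_eq_one.mp hu.isOfFinOrder
  have hu_mem : u ∈ NonUnitalSubring.closure {u} := NonUnitalSubring.subset_closure rfl
  have hpow : ∀ k : ℕ, u ^ (k + 1) ∈ NonUnitalSubring.closure {u} := fun k ↦ by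
    induction k with
    | zero => simpa using hu_mem
    | succ k ih => rw [pow_succ]; exact mul_mem ih hu_mem
  obtain ⟨k, rfl⟩ := Nat.exists_eq_succ_of_ne_zero hn.ne'
  exact hun ▸ hpow k

theorem NonUnitalSubring.closure_singleton_eq_of_isUnit {R : Type*} [Ring R] [Finite R]
    {u : R} (hu : IsUnit u) :
    NonUnitalSubring.closure {u} = (Subring.closure {u}).toNonUnitalSubring := by
  apply le_antisymm
  · exact NonUnitalSubring.closure_le.mpr
      (Set.singleton_subset_iff.mpr (Subring.subset_closure rfl : u ∈ Subring.closure {u}))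
  · have h1 := one_mem_closure_singleton_of_isUnit hu
    have : Subring.closure {u} ≤ (NonUnitalSubring.closure {u}).toSubring h1 :=
      Subring.closure_le.mpr (Set.singleton_subset_iff.mpr
        (NonUnitalSubring.subset_closure rfl : u ∈ NonUnitalSubring.closure {u}))
    exact fun x hx ↦ this hx

theorem not_coverable_of_closure_singleton_eq_top {R : Type*} [NonUnitalRing R] {a : R}
    (ha : NonUnitalSubring.closure {a} = ⊤) : ¬ Coverable R := by
  rintro ⟨n, c, hproper, hcover⟩
  obtain ⟨i, hi⟩ := hcover a
  exact hproper i (eq_top_iff.mpr (ha ▸ NonUnitalSubring.closure_le.mpr (by simpa using hi)))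

/-- A finite commutative local ring with residue field of prime order whose maximal ideal
is principal is generated as a (non-unital) ring by a single element, and hence is not
coverable by proper subrings. -/
theorem local_ring_principal_max_ideal_monogenic (R : Type*) [CommRing R] [Finite R]
    [IsLocalRing R] (p : ℕ) (hp : p.Prime)
    (hres : Nat.card (IsLocalRing.ResidueField R) = p)
    (hprinc : (IsLocalRing.maximalIdeal R).IsPrincipal) :
    (∃ a : R, NonUnitalSubring.closure {a} = ⊤) ∧ ¬ Coverable R := by
  obtain ⟨π, hπ⟩ := hprinc
  have hπ : IsLocalRing.maximalIdeal R = Ideal.span {π} := hπ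
  have hπ_mem : π ∈ IsLocalRing.maximalIdeal R := hπ ▸ Ideal.mem_span_singleton_self π
  have hmod : ∀ r : R, ∃ n : ℤ, r - n ∈ Ideal.span {π} := fun r ↦ by
    obtain ⟨n, hn⟩ := intCast_surjective_of_natCard_eq_prime hp hres (IsLocalRing.residue R r)
    exact ⟨n, hπ ▸ (IsLocalRing.residue_eq_zero_iff _).mp (by simp [hn])⟩
  have hπ_nil : IsNilpotent π := Ring.KrullDimLE.isNilpotent_iff_mem_maximalIdeal.mpr hπ_mem
  have hgen : NonUnitalSubring.closure {1 + π} = ⊤ := by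
    rw [NonUnitalSubring.closure_singleton_eq_of_isUnit hπ_nil.isUnit_one_add,
      Subring.closure_singleton_one_add, Subring.closure_singleton_eq_top_of_isNilpotent hπ_nil hmod]
    rfl
  exact ⟨⟨1 + π, hgen⟩, not_coverable_of_closure_singleton_eq_top hgen⟩
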